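/- Let m ≥ 2 and let d_1, ..., d_m be positive integers with d_1 + ⋯ + d_m = 2(m-1). Then the number of trees on the vertex set {1, ..., m} in which vertex i has degree d_i for every i equals (m-2)! / ((d_1 - 1)! ⋯ (d_m - 1)!). -/

import Mathlib

open Classical

/-!
Since the `d i` are positive and sum to less than `2 m`, some `d j` equals `1`, so `j` is a leaf
of every tree counted. Removing `j` leaves a tree on the other vertices whose degree sequence is
`d` with the entry of the neighbour `k` of `j` lowered by one; conversely, attaching `j` as a leaf
to any `k` gives back a tree with degree sequence `d`. Summing over `k` yields Pascal's recurrence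
for the multinomial coefficient `(m - 2)! / ∏ (d i - 1)!`. Because the degree sum is `2 (m - 1)`,
a graph with degree sequence `d` is a tree as soon as it is connected, so no cycle ever has to be
ruled out.
-/

open Finset Function

namespace Nat

variable {α : Type*} [DecidableEq α] {s : Finset α} {f : α → ℕ}

lemma mul_prod_factorial_update_pred {k : α} (hk : k ∈ s) (hfk : f k ≠ 0) :
    f k * ∏ i ∈ s, (update f k (f k - 1) i)! = ∏ i ∈ s, (f i)! := by
  rw [prod_congr rfl fun i _ => apply_update (fun _ n => n !) f k (f k - 1) i,
    prod_update_of_mem hk, ← mul_assoc, mul_factorial_pred hfk]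
  exact (prod_eq_mul_prod_sdiff_singleton_of_mem hk fun i => (f i)!).symm

theorem multinomial_eq_sum_multinomial_update_pred (h : ∑ i ∈ s, f i ≠ 0) :
    multinomial s f = ∑ k ∈ s with f k ≠ 0, multinomial s (update f k (f k - 1)) := by
  obtain ⟨n, hn⟩ := exists_eq_succ_of_ne_zero h
  have hterm : ∀ k ∈ {k ∈ s | f k ≠ 0},
      (∏ i ∈ s, (f i)!) * multinomial s (update f k (f k - 1)) = f k * n ! := by
    intro k hk
    obtain ⟨hks, hfk⟩ := mem_filter.mp hk
    have hsum : ∑ i ∈ s, update f k (f k - 1) i = n := by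
      have := add_sum_erase s f hks
      rw [sum_update_of_mem hks, sdiff_singleton_eq_erase]
      omega
    rw [← mul_prod_factorial_update_pred hks hfk, mul_assoc, multinomial_spec, hsum]
  apply Nat.eq_of_mul_eq_mul_left (prod_pos fun i _ => factorial_pos (f i))
  rw [multinomial_spec, mul_sum, sum_congr rfl hterm, ← sum_mul, sum_filter_ne_zero, hn,
    factorial_succ]

lemma multinomial_univ_subtype_ne [Fintype α] (a : α) (h : f a = 0) :
    multinomial univ (fun i : {i // i ≠ a} => f i) = multinomial univ f := by
  simp only [multinomial, Fintype.sum_eq_add_sum_subtype_ne f a,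
    Fintype.prod_eq_mul_prod_subtype_ne (fun i => (f i)!) a, h, factorial_zero, zero_add, one_mul]

end Nat

section DegreeSequence

variable {V : Type*} [Fintype V] {d : V → ℕ}

lemma sum_pred_eq_card_sub_two (hd : ∀ i, 1 ≤ d i)
    (hsum : ∑ i, d i = 2 * (Fintype.card V - 1)) :
    ∑ i, (d i - 1) = Fintype.card V - 2 := by
  rw [sum_tsub_distrib _ fun i _ => hd i, hsum]
  simp only [sum_const, card_univ, smul_eq_mul, mul_one]
  omega

lemma exists_eq_one_of_sum_lt (hd : ∀ i, 1 ≤ d i) (hsum : ∑ i, d i < 2 * Fintype.card V) :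
    ∃ j, d j = 1 := by
  obtain ⟨j, -, hj⟩ := exists_lt_of_sum_lt (s := univ) (f := d) (g := fun _ => 2)
    (by simpa [mul_comm] using hsum)
  exact ⟨j, by have := hd j; omega⟩

lemma sum_update_pred_subtype_ne [DecidableEq V] {j : V} (k : {i // i ≠ j}) (hj : d j = 1)
    (hk : 1 ≤ d k) (hsum : ∑ i, d i = 2 * (Fintype.card V - 1)) :
    ∑ i, update (fun i : {i // i ≠ j} => d i) k (d k - 1) i
      = 2 * (Fintype.card {i // i ≠ j} - 1) := by
  have hV := Fintype.sum_eq_add_sum_subtype_ne d j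
  have hW := add_sum_erase univ (fun i : {i // i ≠ j} => d i) (mem_univ k)
  rw [sum_update_of_mem (mem_univ k), sdiff_singleton_eq_erase]
  simp only [Fintype.card_subtype_compl, Fintype.card_unique]
  omega

end DegreeSequence

namespace SimpleGraph

variable {V : Type*}

theorem Connected.isTree_of_sum_degrees [Fintype V] {G : SimpleGraph V} [DecidableRel G.Adj]
    (hG : G.Connected) (hsum : ∑ v, G.degree v = 2 * (Fintype.card V - 1)) : G.IsTree := by
  have : 0 < Fintype.card V := Fintype.card_pos_iff.mpr hG.nonempty
  refine isTree_iff_connected_and_card.mpr ⟨hG, ?_⟩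
  rw [sum_degrees_eq_twice_card_edges] at hsum
  rw [Nat.card_eq_fintype_card, ← edgeFinset_card, Nat.card_eq_fintype_card]
  omega

def deleteVert (G : SimpleGraph V) (j : V) : SimpleGraph {i // i ≠ j} :=
  G.comap (Function.Embedding.subtype _)

@[simp]
lemma deleteVert_adj (G : SimpleGraph V) (j : V) (a b : {i // i ≠ j}) :
    (G.deleteVert j).Adj a b ↔ G.Adj a b :=
  Iff.rfl

lemma degree_eq_degree_deleteVert_add [Fintype V] [DecidableEq V] (G : SimpleGraph V) {j v : V}
    (hv : v ≠ j) :
    G.degree v = (G.deleteVert j).degree ⟨v, hv⟩ + if G.Adj v j then 1 else 0 := by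
  have hdel : (G.deleteVert j).neighborFinset ⟨v, hv⟩ = (G.neighborFinset v).subtype (· ≠ j) := by
    ext; simp
  have hj : {w ∈ G.neighborFinset v | ¬w ≠ j} = if G.Adj v j then {j} else ∅ := by
    ext; split_ifs <;> aesop
  rw [← card_neighborFinset_eq_degree, ← card_neighborFinset_eq_degree, hdel, card_subtype,
    ← card_filter_add_card_filter_not (· ≠ j), hj]
  split_ifs <;> rfl

def addLeaf {j : V} (k : {i // i ≠ j}) (H : SimpleGraph {i // i ≠ j}) : SimpleGraph V :=
  H.map (Function.Embedding.subtype _) ⊔ edge j k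

section addLeaf

variable {j : V} (k : {i // i ≠ j}) (H : SimpleGraph {i // i ≠ j})

lemma addLeaf_adj {a b : V} : (addLeaf k H).Adj a b ↔
    (∃ (ha : a ≠ j) (hb : b ≠ j), H.Adj ⟨a, ha⟩ ⟨b, hb⟩) ∨ (a = j ∧ b = k ∨ a = k ∧ b = j) := by
  have := k.2
  rw [addLeaf, sup_adj, map_adj, edge_adj]
  constructor
  · rintro (⟨a', b', h, rfl, rfl⟩ | ⟨h, -⟩)
    · exact .inl ⟨a'.2, b'.2, h⟩
    · exact .inr h
  · rintro (⟨ha, hb, h⟩ | h)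
    · exact .inl ⟨_, _, h, rfl, rfl⟩
    · exact .inr ⟨h, by grind⟩

lemma addLeaf_adj_leaf (x : V) : (addLeaf k H).Adj j x ↔ x = k := by
  have := k.2
  rw [addLeaf_adj]
  grind

lemma deleteVert_addLeaf : (addLeaf k H).deleteVert j = H := by
  ext ⟨a, ha⟩ ⟨b, hb⟩
  simp [addLeaf_adj, ha, hb]

lemma addLeaf_deleteVert {G : SimpleGraph V} (hG : ∀ x, G.Adj j x ↔ x = k) :
    addLeaf k (G.deleteVert j) = G := by
  ext a b
  rw [addLeaf_adj]
  have := k.2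
  by_cases ha : a = j
  · rw [ha, hG]; grind
  by_cases hb : b = j
  · rw [hb, G.adj_comm, hG]; grind
  simp [ha, hb]

lemma Connected.addLeaf {H : SimpleGraph {i // i ≠ j}} (hH : H.Connected) :
    (SimpleGraph.addLeaf k H).Connected := by
  have hleaf (a : V) : (SimpleGraph.addLeaf k H).Reachable a j := by
    by_cases ha : a = j
    · rw [ha]
    · refine Reachable.trans ?_ ((addLeaf_adj_leaf k H k).mpr rfl).symm.reachable
      exact ((hH.preconnected ⟨a, ha⟩ k).map (Embedding.map _ H).toHom).mono le_sup_left
  have : Nonempty V := ⟨j⟩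
  exact ⟨fun a b => (hleaf a).trans (hleaf b).symm⟩

variable [Fintype V]

lemma degree_addLeaf_leaf : (addLeaf k H).degree j = 1 :=
  degree_eq_one_iff_existsUnique_adj.mpr ⟨k, (addLeaf_adj_leaf k H k).mpr rfl,
    fun x hx => (addLeaf_adj_leaf k H x).mp hx⟩

lemma degree_addLeaf [DecidableEq V] (i : {i // i ≠ j}) :
    (addLeaf k H).degree i = H.degree i + if i = k then 1 else 0 := by
  rw [degree_eq_degree_deleteVert_add _ i.2, deleteVert_addLeaf]
  simp only [adj_comm (addLeaf k H), addLeaf_adj_leaf, Subtype.coe_inj]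

end addLeaf

variable [Fintype V] [DecidableEq V] {d : V → ℕ}

noncomputable def treesWithDegrees (d : V → ℕ) : Finset (SimpleGraph V) :=
  {G | G.IsTree ∧ ∀ i, G.degree i = d i}

lemma mem_treesWithDegrees_iff (hsum : ∑ i, d i = 2 * (Fintype.card V - 1))
    {G : SimpleGraph V} : G ∈ treesWithDegrees d ↔ G.Connected ∧ ∀ i, G.degree i = d i := by
  simp only [treesWithDegrees, mem_filter, mem_univ, true_and]
  refine ⟨fun ⟨hT, hdeg⟩ => ⟨hT.connected, hdeg⟩, fun ⟨hG, hdeg⟩ => ⟨?_, hdeg⟩⟩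
  exact hG.isTree_of_sum_degrees (by simp [hdeg, hsum])

lemma addLeaf_mem_treesWithDegrees_iff {j : V} (k : {i // i ≠ j})
    (H : SimpleGraph {i // i ≠ j}) (hj : d j = 1) (hk : 1 ≤ d k)
    (hsum : ∑ i, d i = 2 * (Fintype.card V - 1)) :
    addLeaf k H ∈ treesWithDegrees d ↔
      H ∈ treesWithDegrees (update (fun i : {i // i ≠ j} => d i) k (d k - 1)) := by
  rw [mem_treesWithDegrees_iff hsum,
    mem_treesWithDegrees_iff (sum_update_pred_subtype_ne k hj hk hsum)]
  refine and_congr ⟨fun hG => ?_, fun hH => hH.addLeaf k⟩ ⟨fun hdeg i => ?_, fun hdeg v => ?_⟩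
  · rw [← deleteVert_addLeaf k H]
    exact hG.induce_compl_singleton_of_degree_eq_one (degree_addLeaf_leaf k H)
  · have := hdeg i
    rw [degree_addLeaf] at this
    rw [update_apply]
    split_ifs at this ⊢ with h
    · subst h; omega
    · omega
  · by_cases hv : v = j
    · rw [hv, degree_addLeaf_leaf, hj]
    · rw [degree_addLeaf k H ⟨v, hv⟩, hdeg]
      by_cases h : ⟨v, hv⟩ = k
      · subst h
        simp only [update_self, if_true]
        dsimp only at hk ⊢
        omega
      · simp [h]

theorem card_treesWithDegrees_eq_sum {j : V} (hd : ∀ i, 1 ≤ d i) (hj : d j = 1)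
    (hsum : ∑ i, d i = 2 * (Fintype.card V - 1)) :
    #(treesWithDegrees d) = ∑ k : {i // i ≠ j},
      #(treesWithDegrees (update (fun i : {i // i ≠ j} => d i) k (d k - 1))) := by
  rw [← card_sigma]
  symm
  refine card_bij (fun p _ => addLeaf p.1 p.2) ?_ ?_ ?_
  · rintro ⟨k, H⟩ hH
    exact (addLeaf_mem_treesWithDegrees_iff k H hj (hd k) hsum).mpr (mem_sigma.mp hH).2
  · rintro ⟨k, H⟩ - ⟨k', H'⟩ - h
    obtain rfl : k = k' := Subtype.ext <|
      (addLeaf_adj_leaf k' H' k).mp (h ▸ (addLeaf_adj_leaf k H k).mpr rfl)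
    obtain rfl : H = H' := by
      simpa only [deleteVert_addLeaf] using congrArg (deleteVert · j) h
    rfl
  · intro G hG
    have hG' := (mem_treesWithDegrees_iff hsum).mp hG
    obtain ⟨k, hjk, huniq⟩ := degree_eq_one_iff_existsUnique_adj.mp ((hG'.2 j).trans hj)
    have hadj : ∀ x, G.Adj j x ↔ x = (⟨k, hjk.ne.symm⟩ : {i // i ≠ j}) :=
      fun x => ⟨huniq x, fun h => h ▸ hjk⟩
    refine ⟨⟨⟨k, hjk.ne.symm⟩, G.deleteVert j⟩, ?_, addLeaf_deleteVert _ hadj⟩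
    rw [mem_sigma, ← addLeaf_mem_treesWithDegrees_iff _ _ hj (hd k) hsum,
      addLeaf_deleteVert _ hadj]
    exact ⟨mem_univ _, hG⟩

lemma treesWithDegrees_eq_empty [Nontrivial V] {i : V} (hi : d i = 0) :
    treesWithDegrees d = ∅ := by
  refine eq_empty_of_forall_notMem fun G hG => ?_
  simp only [treesWithDegrees, mem_filter, mem_univ, true_and] at hG
  have := hG.1.connected.preconnected.degree_pos_of_nontrivial i
  have := hG.2 i
  omega

lemma treesWithDegrees_eq_top (hV : Fintype.card V = 2) (hd : ∀ i, d i = 1) :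
    treesWithDegrees d = {⊤} := by
  have hsum : ∑ i, d i = 2 * (Fintype.card V - 1) := by simp [hd, hV]
  ext G
  rw [mem_treesWithDegrees_iff hsum, mem_singleton]
  constructor
  · rintro ⟨-, hdeg⟩
    ext a b
    refine ⟨Adj.ne, fun hab => (G.degree_eq_card_sub_one a).mp ?_ hab⟩
    rw [hdeg, hd, hV]
  · rintro rfl
    have : Nonempty V := Fintype.card_pos_iff.mp (by omega)
    refine ⟨connected_top, fun i => ?_⟩
    rw [hd, show 1 = Fintype.card V - 1 by omega, degree_eq_card_sub_one]
    exact fun _ h => h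

theorem card_treesWithDegrees (hV : 2 ≤ Fintype.card V) (hd : ∀ i, 1 ≤ d i)
    (hsum : ∑ i, d i = 2 * (Fintype.card V - 1)) :
    #(treesWithDegrees d) = Nat.multinomial univ fun i => d i - 1 := by
  obtain ⟨n, hn⟩ := Nat.exists_eq_add_of_le' hV
  induction n generalizing V with
  | zero =>
    have hd1 (i : V) : d i = 1 := by
      have := sum_eq_zero_iff.mp ((sum_pred_eq_card_sub_two hd hsum).trans (by omega)) i
        (mem_univ i)
      have := hd i
      omega
    rw [treesWithDegrees_eq_top hn hd1, card_singleton]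
    simp [hd1, Nat.multinomial]
  | succ n ih =>
    obtain ⟨j, hj⟩ := exists_eq_one_of_sum_lt hd (by omega)
    have hW : Fintype.card {i // i ≠ j} = n + 2 := by simp [hn]
    have : Nontrivial {i // i ≠ j} := Fintype.one_lt_card_iff_nontrivial.mp (by omega)
    have hsumW : ∑ i : {i // i ≠ j}, (d i - 1) ≠ 0 := by
      have := Fintype.sum_eq_add_sum_subtype_ne (fun i => d i - 1) j
      have := sum_pred_eq_card_sub_two hd hsum
      omega
    rw [card_treesWithDegrees_eq_sum hd hj hsum,
      ← Nat.multinomial_univ_subtype_ne j (by simp [hj]),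
      Nat.multinomial_eq_sum_multinomial_update_pred hsumW]
    refine (sum_filter_of_ne fun k _ hne => ?_).symm.trans (sum_congr rfl fun k hk => ?_)
    · contrapose! hne
      rw [treesWithDegrees_eq_empty (i := k) (by simp; omega), card_empty]
    · have hk : 2 ≤ d k := by have := (mem_filter.mp hk).2; omega
      rw [ih (by omega) (fun i => ?_) (sum_update_pred_subtype_ne k hj (hd k) hsum) hW]
      · congr 1
        funext i
        exact apply_update (fun _ n => n - 1) _ k _ i
      · rw [update_apply]
        split_ifs
        · omega
        · exact hd i

end SimpleGraph

/-- **Trees with prescribed degree sequence.** For `m ≥ 2` and positive integers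
`d 1, …, d m` summing to `2(m-1)`, the number of trees on `Fin m` in which vertex
`i` has degree `d i` for every `i` equals `(m-2)! / ((d 1 - 1)! ⋯ (d m - 1)!)`. -/
theorem card_trees_with_degree_sequence (m : ℕ) (hm : 2 ≤ m) (d : Fin m → ℕ)
    (hd : ∀ i, 1 ≤ d i) (hsum : ∑ i : Fin m, d i = 2 * (m - 1)) :
    (Finset.univ.filter
        (fun G : SimpleGraph (Fin m) => G.IsTree ∧ ∀ i : Fin m, G.degree i = d i)).card
      = Nat.factorial (m - 2) / ∏ i : Fin m, Nat.factorial (d i - 1) := by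
  have hsum' : ∑ i, d i = 2 * (Fintype.card (Fin m) - 1) := by rw [Fintype.card_fin]; exact hsum
  have h := SimpleGraph.card_treesWithDegrees (by simpa using hm) hd hsum'
  rw [Nat.multinomial, sum_pred_eq_card_sub_two hd hsum', Fintype.card_fin] at h
  unfold SimpleGraph.treesWithDegrees at h
  -- the two filters differ only in their `Decidable` instances
  convert h
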